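/- Let r_s > 0, a > r_s/4, q be real numbers, set b := r_s²/(16a) and Q := q/(1 + r_s/(4a))², and fix ϑ ∈ [0, π]. For ρ > 0 define r(ρ) := √(a² + ρ² + 2aρ cos ϑ) and c(ρ) := (a + ρ cos ϑ)/r(ρ) (the value of cos θ in particle-adapted coordinates), and let Ψ(ρ) be Linet's potential evaluated at radius r(ρ) and polar angle with cosine c(ρ). Then, as ρ → 0⁺, Ψ(ρ) − (q(1 − r_s/(4a))/(1 + r_s/(4a))³)·(1/ρ) tends to q·r_s/(2a²(1 + r_s/(4a))⁴) + (q·r_s(2 − r_s/(4a))/(4a²(1 + r_s/(4a))⁴))·cos ϑ. That is, near the particle ψ has a Coulomb-type divergence q(1 − r_s/(4a))(1 + r_s/(4a))⁻³/ρ plus the stated finite part. -/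

import Mathlib

open Filter Topology

/-- Copson's auxiliary function μ, expressed through c = cos θ (on which alone it
depends), with particle position `a` and `b = r_s²/(16a)`. -/
noncomputable def muLinetC (r_s a r c : ℝ) : ℝ :=
  Real.sqrt (((r - r_s ^ 2 / (16 * a)) ^ 2 + 2 * (r_s ^ 2 / (16 * a)) * r * (1 - c)) /
    ((r - a) ^ 2 + 2 * a * r * (1 - c)))

/-- Linet's electrostatic potential ψ = (Q/(rμ))·((μ + r_s/(4a))/(1 + r_s/(4r)))²,
expressed through c = cos θ, with Q = q/(1 + r_s/(4a))². -/
noncomputable def psiLinetC (r_s a q r c : ℝ) : ℝ :=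
  (q / (1 + r_s / (4 * a)) ^ 2) / (r * muLinetC r_s a r c) *
    ((muLinetC r_s a r c + r_s / (4 * a)) / (1 + r_s / (4 * r))) ^ 2

/-!
In particle-adapted coordinates the numerator and denominator of μ² are the squared distances
from the field point to the image point `b = r_s²/(16a)` and to the particle, so `μ = S/ρ` with
`S = √((a-b)² + ρ² + 2(a-b)ρ cos ϑ)`. Hence `ρψ = Q·F(ρ)` with
`F(ρ) = r(ρ)(S + r_sρ/(4a))² / (S (r(ρ) + r_s/4)²)` (`linetRegularPart`), which is differentiable at `ρ = 0`, and
`ψ - Q F(0)/ρ = Q (F(ρ) - F(0))/ρ → Q F'(0)`. The constants of the theorem are `Q F(0)` and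
`Q F'(0)`, with `F(0) = (4a - r_s)/(4a + r_s)`.
-/

/-- Law of cosines: `|OX|` when `|OP| = d`, `|PX| = ρ` and `k` is the cosine of the angle
between the vectors `OP` and `PX`. -/
noncomputable def cosineLawDist (d k ρ : ℝ) : ℝ :=
  √(d ^ 2 + ρ ^ 2 + 2 * d * ρ * k)

theorem cosineLawDist_zero {d : ℝ} (hd : 0 ≤ d) (k : ℝ) : cosineLawDist d k 0 = d := by
  simp [cosineLawDist, Real.sqrt_sq hd]

theorem hasDerivAt_cosineLawDist {d : ℝ} (hd : 0 < d) (k : ℝ) :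
    HasDerivAt (cosineLawDist d k) k 0 := by
  have hpoly : HasDerivAt (fun ρ : ℝ => d ^ 2 + ρ ^ 2 + 2 * d * ρ * k) (2 * d * k) 0 := by
    simpa using (((hasDerivAt_id' (0 : ℝ)).fun_pow 2).const_add (d ^ 2)).fun_add
      (((hasDerivAt_id' (0 : ℝ)).const_mul (2 * d)).mul_const k)
  refine (hpoly.sqrt (by simp [hd.ne'])).congr_deriv ?_
  simp [Real.sqrt_sq hd.le, hd.ne']

theorem eventually_cosineLawDist_pos {d : ℝ} (hd : 0 < d) (k : ℝ) :
    ∀ᶠ ρ in 𝓝 0, 0 < cosineLawDist d k ρ :=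
  continuousAt_const.eventually_lt (hasDerivAt_cosineLawDist hd k).continuousAt
    (by rwa [cosineLawDist_zero hd.le])

/-- Both sides are the squared distance from the field point to the point at `b` on the axis:
on the left in polar coordinates `(R, c)` about the origin, with `c = (a + ρk)/R`, on the right
about the point at `a`. -/
theorem cosineLawDist_shift_sq {a k ρ : ℝ} (b : ℝ) (hR : 0 < cosineLawDist a k ρ) :
    (cosineLawDist a k ρ - b) ^ 2 +
        2 * b * cosineLawDist a k ρ * (1 - (a + ρ * k) / cosineLawDist a k ρ) =
      (a - b) ^ 2 + ρ ^ 2 + 2 * (a - b) * ρ * k := by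
  have hR2 : cosineLawDist a k ρ ^ 2 = a ^ 2 + ρ ^ 2 + 2 * a * ρ * k :=
    Real.sq_sqrt (Real.sqrt_pos.1 hR).le
  field_simp
  linear_combination hR2

noncomputable def linetSeparation (r_s a : ℝ) : ℝ :=
  a - r_s ^ 2 / (16 * a)

theorem linetSeparation_eq {r_s a : ℝ} (ha : a ≠ 0) :
    linetSeparation r_s a = (4 * a - r_s) * (4 * a + r_s) / (16 * a) := by
  rw [linetSeparation]
  field_simp
  ring

theorem linetSeparation_pos {r_s a : ℝ} (hrs : 0 < r_s) (ha : r_s / 4 < a) :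
    0 < linetSeparation r_s a := by
  have ha0 : 0 < a := by linarith
  rw [linetSeparation, sub_pos, div_lt_iff₀ (by positivity)]
  nlinarith

theorem muLinetC_eq_cosineLawDist_div {r_s a k ρ : ℝ} (hρ : 0 < ρ)
    (hR : 0 < cosineLawDist a k ρ) :
    muLinetC r_s a (cosineLawDist a k ρ) ((a + ρ * k) / cosineLawDist a k ρ) =
      cosineLawDist (linetSeparation r_s a) k ρ / ρ := by
  have hden : (cosineLawDist a k ρ - a) ^ 2 +
      2 * a * cosineLawDist a k ρ * (1 - (a + ρ * k) / cosineLawDist a k ρ) = ρ ^ 2 := by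
    simpa using cosineLawDist_shift_sq a hR
  rw [muLinetC, cosineLawDist_shift_sq _ hR, hden, Real.sqrt_div' _ (sq_nonneg ρ),
    Real.sqrt_sq hρ.le]
  rfl

noncomputable def linetRegularPart (r_s a k ρ : ℝ) : ℝ :=
  cosineLawDist a k ρ * (cosineLawDist (linetSeparation r_s a) k ρ + r_s / (4 * a) * ρ) ^ 2 /
    (cosineLawDist (linetSeparation r_s a) k ρ * (cosineLawDist a k ρ + r_s / 4) ^ 2)

theorem psiLinetC_eq_linetRegularPart_div {r_s a q k ρ : ℝ} (hρ : 0 < ρ)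
    (hR : 0 < cosineLawDist a k ρ) (hRs : cosineLawDist a k ρ + r_s / 4 ≠ 0) :
    psiLinetC r_s a q (cosineLawDist a k ρ) ((a + ρ * k) / cosineLawDist a k ρ) =
      q / (1 + r_s / (4 * a)) ^ 2 * linetRegularPart r_s a k ρ / ρ := by
  have hRs' : 4 * cosineLawDist a k ρ + r_s ≠ 0 := by contrapose! hRs; linarith
  rw [psiLinetC, muLinetC_eq_cosineLawDist_div hρ hR, linetRegularPart]
  field_simp

theorem linetRegularPart_zero {r_s a : ℝ} (hrs : 0 < r_s) (ha : r_s / 4 < a) (k : ℝ) :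
    linetRegularPart r_s a k 0 = (4 * a - r_s) / (4 * a + r_s) := by
  have ha0 : 0 < a := by linarith
  have hm : 4 * a - r_s ≠ 0 := by linarith
  simp only [linetRegularPart, cosineLawDist_zero ha0.le,
    cosineLawDist_zero (linetSeparation_pos hrs ha).le, mul_zero, add_zero]
  rw [linetSeparation_eq ha0.ne']
  field_simp
  ring

theorem hasDerivAt_linetRegularPart {r_s a : ℝ} (hrs : 0 < r_s) (ha : r_s / 4 < a) (k : ℝ) :
    HasDerivAt (linetRegularPart r_s a k)
      (r_s * (8 * a + (8 * a - r_s) * k) / (a * (4 * a + r_s) ^ 2)) 0 := by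
  have ha0 : 0 < a := by linarith
  have hm : 4 * a - r_s ≠ 0 := by linarith
  have hd := linetSeparation_pos hrs ha
  have hR := hasDerivAt_cosineLawDist ha0 k
  have hS := hasDerivAt_cosineLawDist hd k
  have hnum := hR.fun_mul
    ((hS.fun_add ((hasDerivAt_id' (0 : ℝ)).const_mul (r_s / (4 * a)))).fun_pow 2)
  have hden := hS.fun_mul ((hR.add_const (r_s / 4)).fun_pow 2)
  refine (hnum.fun_div hden ?_).congr_deriv ?_
  · simp only [cosineLawDist_zero hd.le, cosineLawDist_zero ha0.le]
    exact mul_ne_zero hd.ne' (by positivity)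
  simp only [cosineLawDist_zero hd.le, cosineLawDist_zero ha0.le, mul_zero, add_zero,
    mul_one, Nat.cast_ofNat, Nat.add_one_sub_one, pow_one]
  rw [linetSeparation_eq ha0.ne']
  field_simp
  ring

theorem linet_potential_laurent_expansion_general (r_s a q ϑ : ℝ)
    (hrs : 0 < r_s) (ha : r_s / 4 < a) :
    Tendsto (fun ρ : ℝ =>
        psiLinetC r_s a q (Real.sqrt (a ^ 2 + ρ ^ 2 + 2 * a * ρ * Real.cos ϑ))
            ((a + ρ * Real.cos ϑ) / Real.sqrt (a ^ 2 + ρ ^ 2 + 2 * a * ρ * Real.cos ϑ)) -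
          (q * (1 - r_s / (4 * a)) / (1 + r_s / (4 * a)) ^ 3) * (1 / ρ))
      (𝓝[>] 0)
      (𝓝 (q * r_s / (2 * a ^ 2 * (1 + r_s / (4 * a)) ^ 4) +
        (q * r_s * (2 - r_s / (4 * a)) / (4 * a ^ 2 * (1 + r_s / (4 * a)) ^ 4)) *
          Real.cos ϑ)) := by
  have ha0 : 0 < a := by linarith
  have hslope := ((hasDerivAt_linetRegularPart hrs ha (Real.cos ϑ)).tendsto_slope_zero_right
    ).const_mul (q / (1 + r_s / (4 * a)) ^ 2)
  convert hslope.congr' ?_ using 2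
  · field_simp
    ring
  have hpos := eventually_cosineLawDist_pos ha0 (Real.cos ϑ)
  filter_upwards [self_mem_nhdsWithin, nhdsWithin_le_nhds hpos] with ρ hρ hR
  have hψ := psiLinetC_eq_linetRegularPart_div (q := q) hρ hR (by positivity)
  simp only [cosineLawDist] at hψ
  rw [hψ, zero_add, linetRegularPart_zero hrs ha, smul_eq_mul]
  field_simp

/-- Near the particle, in particle-adapted coordinates (ρ,ϑ) with
r(ρ) = √(a² + ρ² + 2aρcos ϑ) and cos θ = (a + ρ cos ϑ)/r(ρ), Linet's potential has a
Coulomb-type divergence q(1 − r_s/(4a))(1 + r_s/(4a))⁻³/ρ plus the finite part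
q r_s/(2a²(1 + r_s/(4a))⁴) + (q r_s(2 − r_s/(4a))/(4a²(1 + r_s/(4a))⁴))·cos ϑ. -/
theorem linet_potential_laurent_expansion (r_s a q ϑ : ℝ)
    (hrs : 0 < r_s) (ha : r_s / 4 < a) (hq : q ≠ 0)
    (hϑ : ϑ ∈ Set.Icc 0 Real.pi) :
    Tendsto (fun ρ : ℝ =>
        psiLinetC r_s a q (Real.sqrt (a ^ 2 + ρ ^ 2 + 2 * a * ρ * Real.cos ϑ))
            ((a + ρ * Real.cos ϑ) / Real.sqrt (a ^ 2 + ρ ^ 2 + 2 * a * ρ * Real.cos ϑ)) -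
          (q * (1 - r_s / (4 * a)) / (1 + r_s / (4 * a)) ^ 3) * (1 / ρ))
      (𝓝[>] 0)
      (𝓝 (q * r_s / (2 * a ^ 2 * (1 + r_s / (4 * a)) ^ 4) +
        (q * r_s * (2 - r_s / (4 * a)) / (4 * a ^ 2 * (1 + r_s / (4 * a)) ^ 4)) *
          Real.cos ϑ)) :=
  linet_potential_laurent_expansion_general r_s a q ϑ hrs ha
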